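/- Under the stated assumptions, for every α ∈ ℂ the scalar product admits the generalized Izergin determinant representation S(PQ,α) = det_{1≤i,k≤N} [ 1/sinh(ξ_i − p_k) + α·f̃(ξ_i)/sinh(ξ_i − p_k − η) ] / det_{1≤i,k≤N} [ 1/sinh(ξ_i − p_k) ]. -/

import Mathlib

open Complex Finset

noncomputable section

def Vand {m : ℕ} (x : Fin m → ℂ) : ℂ :=
  ∏ i : Fin m, ∏ j ∈ Finset.Ioi i, Complex.sinh (x j - x i)

def trigPoly {N : ℕ} (r : Fin N → ℂ) (l : ℂ) : ℂ := ∏ j, Complex.sinh ((l - r j) / 2)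
def iπ : ℂ := (Real.pi : ℂ) * Complex.I

/-- the scalar product `S(PQ,α)` of two separate states -/
def SP {N : ℕ} (η : ℂ) (ξ : Fin N → ℂ) (P Q : ℂ → ℂ) (α : ℂ) : ℂ :=
  ∑ h : Fin N → Fin 2,
    (∏ n, (α * P (ξ n) * Q (ξ n) / (P (ξ n - η) * Q (ξ n - η))) ^ (1 - (h n : ℕ))) *
      Vand (fun n => ξ n - ((1 - (h n : ℕ) : ℕ) : ℂ) * η) / Vand ξ

/-!
The numerator determinant is multilinear in its rows, so it expands into a sum over
`h ∈ {0,1}^N` of trigonometric Cauchy determinants `det [1 / sinh (x_i - p_k)]` at the shifted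
points `x_n = ξ_n - (1 - h_n) η`. Substituting `u = exp (2x)` reduces each of them to the rational
Cauchy determinant, which gives `Vand x · ∏_{i<j} sinh (p_i - p_j) / ∏_{i,k} sinh (x_i - p_k)`.
Dividing by the denominator (the term `h ≡ 1`) leaves `Vand x / Vand ξ` times a product of
row factors, and `∏_k sinh (w - p_k) = (-2i)^N P(w) P(w + iπ)` shows that the row factor
`α f̃(ξ_n) ∏_k sinh (ξ_n - p_k) / ∏_k sinh (ξ_n - η - p_k)` equals the factor
`α P(ξ_n) Q(ξ_n) / (P(ξ_n - η) Q(ξ_n - η))` of the scalar product.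
-/

open Matrix

open Polynomial in
theorem det_prod_compl_sub {K : Type*} [Field K] {n : ℕ} (u v : Fin n → K)
    (hv : Function.Injective v) :
    det (of fun i k => ∏ l ∈ {k}ᶜ, (u i - v l)) =
      (∏ i, ∏ j ∈ Ioi i, (u j - u i)) * ∏ i, ∏ j ∈ Ioi i, (v i - v j) := by
  -- The matrix is `vandermonde u` times the coefficient matrix `Cf` of the polynomials `g k`;
  -- at `u = v` it is diagonal, which determines `det Cf`.
  set g : Fin n → K[X] := fun k => ∏ l ∈ {k}ᶜ, (X - C (v l))
  set Cf : Matrix (Fin n) (Fin n) K := of fun j k => (g k).coeff j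
  have hdeg (k : Fin n) : (g k).natDegree < n := by
    have : (g k).natDegree = n - 1 := by
      simp [g, natDegree_prod_of_monic _ _ (fun l _ => monic_X_sub_C (v l)), card_compl]
    have := k.pos
    omega
  have hfactor (w : Fin n → K) :
      of (fun i k => ∏ l ∈ {k}ᶜ, (w i - v l)) = vandermonde w * Cf := by
    ext i k
    have : (g k).eval (w i) = ∏ l ∈ {k}ᶜ, (w i - v l) := by simp [g, eval_prod]
    rw [of_apply, ← this, eval_eq_sum_range' (hdeg k), ← Fin.sum_univ_eq_sum_range, mul_apply]
    simp [vandermonde_apply, Cf, mul_comm]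
  have hdiag : of (fun i k => ∏ l ∈ {k}ᶜ, (v i - v l)) =
      diagonal fun k => ∏ l ∈ {k}ᶜ, (v k - v l) := by
    ext i k
    by_cases h : i = k
    · simp [h]
    · rw [diagonal_apply_ne _ h, of_apply]
      exact prod_eq_zero (by simpa using h) (sub_self _)
  have hCf : det (vandermonde v) * det Cf =
      det (vandermonde v) * ∏ i, ∏ j ∈ Ioi i, (v i - v j) := by
    rw [← det_mul, ← hfactor, hdiag, det_diagonal, det_vandermonde,
      ← prod_prod_Ioi_mul_eq_prod_prod_off_diag, ← prod_mul_distrib]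
    exact prod_congr rfl fun i _ => by rw [prod_mul_distrib, mul_comm]
  rw [hfactor, det_mul, det_vandermonde,
    mul_left_cancel₀ (det_vandermonde_ne_zero_iff.mpr hv) hCf]

theorem det_prod_compl_mul_sub {K : Type*} [Field K] {n : ℕ} (a b u v : Fin n → K)
    (hv : Function.Injective v) :
    det (of fun i k => ∏ l ∈ {k}ᶜ, a i * b l * (u i - v l)) =
      ∏ i, ∏ j ∈ Ioi i, a i * a j * (u j - u i) * (b i * b j * (v i - v j)) := by
  have hrow : ∏ i, ∏ j ∈ Ioi i, a i * a j = ∏ i, ∏ _l ∈ ({i}ᶜ : Finset _), a i :=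
    prod_prod_Ioi_mul_eq_prod_prod_off_diag fun _ i => a i
  have hcol : ∏ i, ∏ j ∈ Ioi i, b j * b i = ∏ k, ∏ l ∈ ({k}ᶜ : Finset _), b l :=
    prod_prod_Ioi_mul_eq_prod_prod_off_diag fun j _ => b j
  have hentry : of (fun i k => ∏ l ∈ {k}ᶜ, a i * b l * (u i - v l)) =
      of fun i k => (∏ _l ∈ ({i}ᶜ : Finset _), a i) *
        ((∏ l ∈ ({k}ᶜ : Finset _), b l) * ∏ l ∈ {k}ᶜ, (u i - v l)) := by
    ext i k
    rw [of_apply, of_apply, prod_mul_distrib, prod_mul_distrib, prod_const, prod_const,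
      card_compl, card_compl, card_singleton, card_singleton, mul_assoc]
  have hscale : det (of fun i k => ∏ l ∈ {k}ᶜ, a i * b l * (u i - v l)) =
      (∏ i, ∏ _l ∈ ({i}ᶜ : Finset _), a i) *
        ((∏ k, ∏ l ∈ ({k}ᶜ : Finset _), b l) * det (of fun i k => ∏ l ∈ {k}ᶜ, (u i - v l))) := by
    rw [hentry]
    exact (det_mul_column _ _).trans (congrArg _ (det_mul_row _ _))
  rw [hscale, det_prod_compl_sub u v hv, ← hrow, ← hcol]
  simp only [← prod_mul_distrib]
  exact prod_congr rfl fun i _ => prod_congr rfl fun j _ => by ring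

theorem det_one_div_eq_inv_prod_mul_det_prod_compl {K : Type*} [Field K] {n : ℕ}
    (A : Fin n → Fin n → K) (hA : ∀ i k, A i k ≠ 0) :
    det (of fun i k => 1 / A i k) =
      (∏ i, ∏ l, A i l)⁻¹ * det (of fun i k => ∏ l ∈ {k}ᶜ, A i l) := by
  have hentry (i k : Fin n) : 1 / A i k = (∏ l, A i l)⁻¹ * ∏ l ∈ {k}ᶜ, A i l := by
    rw [Fintype.prod_eq_mul_prod_compl k, mul_inv, mul_assoc,
      inv_mul_cancel₀ (prod_ne_zero_iff.mpr fun l _ => hA i l), mul_one, one_div]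
  simp_rw [hentry, ← prod_inv_distrib]
  exact det_mul_column _ _

theorem sinh_sub_eq_exp (x y : ℂ) :
    sinh (x - y) = exp (-x) / 2 * exp (-y) * (exp (2 * x) - exp (2 * y)) := by
  rw [sinh, show x - y = -x + -y + 2 * x by ring, show -(-x + -y + 2 * x) = -x + -y + 2 * y by ring,
    exp_add, exp_add, exp_add, exp_add]
  ring

theorem sinh_ne_zero_of_forall_ne_int_mul_iπ {z : ℂ} (h : ∀ m : ℤ, z ≠ m * iπ) : sinh z ≠ 0 := by
  intro hz
  obtain ⟨k, hk⟩ := sin_eq_zero_iff.mp (show sin (z * I) = 0 by rw [sin_mul_I, hz, zero_mul])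
  refine h (-k) ?_
  rw [iπ]
  push_cast
  linear_combination (-I) * hk + z * I_sq

theorem det_one_div_sinh_sub {n : ℕ} (x y : Fin n → ℂ) (hxy : ∀ i k, sinh (x i - y k) ≠ 0)
    (hy : ∀ i j, i ≠ j → sinh (y i - y j) ≠ 0) :
    det (of fun i k => 1 / sinh (x i - y k)) =
      (∏ i, ∏ l, sinh (x i - y l))⁻¹ * (Vand x * ∏ i, ∏ j ∈ Ioi i, sinh (y i - y j)) := by
  have hinj : Function.Injective fun k => exp (2 * y k) := by
    intro i j hij
    by_contra hne
    exact hy i j hne (by rw [sinh_sub_eq_exp]; simp only at hij; rw [hij, sub_self, mul_zero])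
  rw [det_one_div_eq_inv_prod_mul_det_prod_compl _ hxy]
  congr 1
  simp_rw [sinh_sub_eq_exp (x _) (y _)]
  rw [det_prod_compl_mul_sub _ _ _ _ hinj, Vand, ← prod_mul_distrib]
  refine prod_congr rfl fun i _ => ?_
  rw [← prod_mul_distrib]
  refine prod_congr rfl fun j _ => ?_
  rw [sinh_sub_eq_exp (x j), sinh_sub_eq_exp (y i)]
  ring

theorem sinh_eq_neg_two_I_mul_sinh_half_mul_sinh_half_add_iπ (z : ℂ) :
    sinh z = -2 * I * sinh (z / 2) * sinh ((z + iπ) / 2) := by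
  have hshift : sinh ((z + iπ) / 2) = I * cosh (z / 2) := by
    rw [show (z + iπ) / 2 = z / 2 + ((Real.pi / 2 : ℝ) : ℂ) * I by rw [iπ]; push_cast; ring,
      sinh_add, sinh_mul_I, cosh_mul_I, ← ofReal_sin, ← ofReal_cos, Real.sin_pi_div_two,
      Real.cos_pi_div_two, ofReal_zero, ofReal_one, mul_zero, zero_add, one_mul, mul_comm]
  rw [hshift, show z = 2 * (z / 2) by ring, sinh_two_mul]
  ring_nf
  rw [I_sq]
  ring

theorem prod_sinh_sub_eq_trigPoly {N : ℕ} (p : Fin N → ℂ) (w : ℂ) :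
    ∏ l, sinh (w - p l) = (-2 * I) ^ N * trigPoly p w * trigPoly p (w + iπ) := by
  simp_rw [trigPoly, sinh_eq_neg_two_I_mul_sinh_half_mul_sinh_half_add_iπ (w - _),
    prod_mul_distrib, prod_const, card_univ, Fintype.card_fin, add_sub_right_comm, mul_pow]

theorem mul_div_mul_inv_eq_mul_div_mul_inv {K : Type*} [Field K] (α c q r P₀ P₁ P₂ P₃ : K)
    (h₀ : P₀ ≠ 0) (h₃ : P₃ ≠ 0) :
    α * P₀ * q / (P₁ * r) * (c * P₀ * P₂)⁻¹ = α * (P₃ * q / (P₂ * r)) * (c * P₁ * P₃)⁻¹ :=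
  calc α * P₀ * q / (P₁ * r) * (c * P₀ * P₂)⁻¹
      = α * q * r⁻¹ * c⁻¹ * P₁⁻¹ * P₂⁻¹ * (P₀ * P₀⁻¹) := by ring
    _ = α * q * r⁻¹ * c⁻¹ * P₁⁻¹ * P₂⁻¹ * (P₃ * P₃⁻¹) := by
      rw [mul_inv_cancel₀ h₀, mul_inv_cancel₀ h₃]
    _ = α * (P₃ * q / (P₂ * r)) * (c * P₁ * P₃)⁻¹ := by ring

theorem ratio_mul_inv_prod_sinh_eq {N : ℕ} (p : Fin N → ℂ) (Q : ℂ → ℂ) (α η u : ℂ)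
    (hu : ∏ l, sinh (u - p l) ≠ 0) (huη : ∏ l, sinh (u - η - p l) ≠ 0) :
    α * trigPoly p u * Q u / (trigPoly p (u - η) * Q (u - η)) * (∏ l, sinh (u - p l))⁻¹ =
      α * (trigPoly p (u - η + iπ) * Q u / (trigPoly p (u + iπ) * Q (u - η))) *
        (∏ l, sinh (u - η - p l))⁻¹ := by
  simp only [prod_sinh_sub_eq_trigPoly] at hu huη ⊢
  exact mul_div_mul_inv_eq_mul_div_mul_inv _ _ _ _ _ _ _ _
    (right_ne_zero_of_mul (left_ne_zero_of_mul hu)) (right_ne_zero_of_mul huη)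

def shiftPts {N : ℕ} (η : ℂ) (ξ : Fin N → ℂ) (h : Fin N → Fin 2) : Fin N → ℂ :=
  fun n => ξ n - ((1 - (h n : ℕ) : ℕ) : ℂ) * η

theorem shiftPts_eq_or {N : ℕ} (η : ℂ) (ξ : Fin N → ℂ) (h : Fin N → Fin 2) (n : Fin N) :
    (h n = 1 ∧ shiftPts η ξ h n = ξ n) ∨ (h n = 0 ∧ shiftPts η ξ h n = ξ n - η) := by
  unfold shiftPts
  generalize h n = j
  fin_cases j <;> simp

theorem det_one_div_sinh_add_eq_sum {N : ℕ} (η : ℂ) (ξ p β : Fin N → ℂ) :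
    det (of fun i k => 1 / sinh (ξ i - p k) + β i / sinh (ξ i - p k - η)) =
      ∑ h : Fin N → Fin 2, (∏ n, β n ^ (1 - (h n : ℕ))) *
        det (of fun i k => 1 / sinh (shiftPts η ξ h i - p k)) := by
  let row : Fin N → Fin 2 → Fin N → ℂ := fun i j k =>
    β i ^ (1 - (j : ℕ)) * (1 / sinh (ξ i - ((1 - (j : ℕ) : ℕ) : ℂ) * η - p k))
  have hsum : of (fun i k => 1 / sinh (ξ i - p k) + β i / sinh (ξ i - p k - η)) =
      of fun i => ∑ j, row i j := by
    ext i k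
    simp [row, Fin.sum_univ_two, sub_right_comm, div_eq_mul_inv, add_comm]
  calc det (of fun i k => 1 / sinh (ξ i - p k) + β i / sinh (ξ i - p k - η))
      = detRowAlternating (fun i => ∑ j, row i j) := by rw [hsum]; rfl
    _ = ∑ h : Fin N → Fin 2, detRowAlternating (fun i => row i (h i)) :=
      detRowAlternating.toMultilinearMap.map_sum row
    _ = _ := sum_congr rfl fun h _ => det_mul_column _ _

theorem prod_ratio_mul_inv_prod_sinh_eq {N : ℕ} (η : ℂ) (ξ p : Fin N → ℂ) (Q : ℂ → ℂ) (α : ℂ)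
    (h : Fin N → Fin 2) (hξp : ∀ i k, sinh (ξ i - p k) ≠ 0)
    (hξηp : ∀ i k, sinh (ξ i - η - p k) ≠ 0) :
    (∏ n, (α * trigPoly p (ξ n) * Q (ξ n) / (trigPoly p (ξ n - η) * Q (ξ n - η))) ^
        (1 - (h n : ℕ))) * (∏ i, ∏ l, sinh (ξ i - p l))⁻¹ =
      (∏ n, (α * (trigPoly p (ξ n - η + iπ) * Q (ξ n) /
          (trigPoly p (ξ n + iπ) * Q (ξ n - η)))) ^ (1 - (h n : ℕ))) *
        (∏ i, ∏ l, sinh (shiftPts η ξ h i - p l))⁻¹ := by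
  rw [← prod_inv_distrib, ← prod_inv_distrib, ← prod_mul_distrib, ← prod_mul_distrib]
  refine prod_congr rfl fun n _ => ?_
  rcases shiftPts_eq_or η ξ h n with ⟨hn, hs⟩ | ⟨hn, hs⟩
  · simp [hn, hs]
  · simp only [hn, hs, Fin.coe_ofNat_eq_mod, Nat.zero_mod, Nat.sub_zero, pow_one]
    exact ratio_mul_inv_prod_sinh_eq p Q α η (ξ n) (prod_ne_zero_iff.mpr fun l _ => hξp n l)
      (prod_ne_zero_iff.mpr fun l _ => hξηp n l)

theorem scalar_product_izergin (N : ℕ) (η : ℂ) (ξ p : Fin N → ℂ) (α : ℂ)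
    (P Q ftil : ℂ → ℂ)
    (hP : P = trigPoly p)
    (hftil : ftil = fun u => P (u - η + iπ) * Q u / (P (u + iπ) * Q (u - η)))
    (hpp : ∀ i j, i ≠ j → ∀ m : ℤ, p i - p j ≠ (m : ℂ) * iπ)
    (hξp : ∀ i k, ∀ m : ℤ, ξ i - p k ≠ (m : ℂ) * iπ)
    (hξpη : ∀ i k, ∀ m : ℤ, ξ i - p k - η ≠ (m : ℂ) * iπ) :
    SP η ξ P Q α =
      Matrix.det (Matrix.of (fun i k : Fin N =>
          1 / Complex.sinh (ξ i - p k) + α * ftil (ξ i) / Complex.sinh (ξ i - p k - η))) /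
        Matrix.det (Matrix.of (fun i k : Fin N => 1 / Complex.sinh (ξ i - p k))) := by
  subst hP hftil
  have hsξp i k : sinh (ξ i - p k) ≠ 0 := sinh_ne_zero_of_forall_ne_int_mul_iπ (hξp i k)
  have hsξηp i k : sinh (ξ i - η - p k) ≠ 0 :=
    sinh_ne_zero_of_forall_ne_int_mul_iπ fun m hm => hξpη i k m (by rw [← hm]; ring)
  have hspp i j (hij : i ≠ j) : sinh (p i - p j) ≠ 0 :=
    sinh_ne_zero_of_forall_ne_int_mul_iπ (hpp i j hij)
  have hsh h i k : sinh (shiftPts η ξ h i - p k) ≠ 0 := by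
    rcases shiftPts_eq_or η ξ h i with ⟨-, hs⟩ | ⟨-, hs⟩ <;> rw [hs]
    exacts [hsξp i k, hsξηp i k]
  set S := ∏ i, ∏ l, sinh (ξ i - p l)
  set W := ∏ i, ∏ j ∈ Ioi i, sinh (p i - p j)
  have hSW : S⁻¹ * W ≠ 0 :=
    mul_ne_zero (inv_ne_zero (prod_ne_zero_iff.mpr fun i _ => prod_ne_zero_iff.mpr
      fun l _ => hsξp i l)) (prod_ne_zero_iff.mpr fun i _ => prod_ne_zero_iff.mpr
      fun j hj => hspp i j (mem_Ioi.mp hj).ne)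
  rw [det_one_div_sinh_add_eq_sum, sum_div, SP]
  refine sum_congr rfl fun h _ => ?_
  rw [det_one_div_sinh_sub _ _ (hsh h) hspp, det_one_div_sinh_sub _ _ hsξp hspp]
  have key := prod_ratio_mul_inv_prod_sinh_eq η ξ p Q α h hsξp hsξηp
  calc _ = _ * Vand (shiftPts η ξ h) * _ / (Vand ξ * _) := (mul_div_mul_right _ _ hSW).symm
    _ = _ := by linear_combination (Vand (shiftPts η ξ h) * W / (S⁻¹ * (Vand ξ * W))) * key

end
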